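/- Mills' ratio of the standard normal satisfies the lower bound M(ρ) > 2/(√(ρ²+4) + ρ) for all ρ > 0, where M(ρ) = e^(ρ²/2)·∫_ρ^∞ e^(-t²/2) dt. -/
import Mathlib


open Real MeasureTheory Set

/-- Mills' ratio of the standard normal: `M(ρ) = e^(ρ²/2)·∫_ρ^∞ e^(-t²/2) dt`. -/
noncomputable def millsRatio (ρ : ℝ) : ℝ :=
  Real.exp (ρ ^ 2 / 2) * ∫ t in Set.Ioi ρ, Real.exp (-t ^ 2 / 2)

namespace MillsAux

open Filter

noncomputable def f (t : ℝ) : ℝ := Real.exp (-t ^ 2 / 2)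

lemma f_eq : f = fun t : ℝ => Real.exp (-(1/2) * t ^ 2) := by
  funext t; unfold f; ring_nf

lemma f_cont : Continuous f := by unfold f; fun_prop

lemma f_integrable : Integrable f := by
  rw [f_eq]; exact integrable_exp_neg_mul_sq (by norm_num)

noncomputable def g (ρ : ℝ) : ℝ := (Real.sqrt (ρ ^ 2 + 4) - ρ) / 2

noncomputable def I (ρ : ℝ) : ℝ := ∫ t in Ioi ρ, f t

lemma I_eq (x : ℝ) : I x = I 0 - ∫ t in (0:ℝ)..x, f t := by
  rcases le_or_gt 0 x with h | h
  · rw [intervalIntegral.integral_of_le h]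
    have h2 : I 0 = (∫ t in Ioc 0 x, f t) + I x := by
      rw [I, I, ← setIntegral_union Ioc_disjoint_Ioi_same measurableSet_Ioi
        f_integrable.integrableOn f_integrable.integrableOn, Ioc_union_Ioi_eq_Ioi h]
    rw [h2]; ring
  · rw [intervalIntegral.integral_symm, intervalIntegral.integral_of_le h.le]
    have h2 : I x = (∫ t in Ioc x 0, f t) + I 0 := by
      rw [I, I, ← setIntegral_union Ioc_disjoint_Ioi_same measurableSet_Ioi
        f_integrable.integrableOn f_integrable.integrableOn, Ioc_union_Ioi_eq_Ioi h.le]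
    rw [h2]; ring

lemma hasDerivAt_I (ρ : ℝ) : HasDerivAt I (-(f ρ)) ρ := by
  have h : HasDerivAt (fun x => ∫ t in (0:ℝ)..x, f t) (f ρ) ρ :=
    intervalIntegral.integral_hasDerivAt_right (f_integrable.intervalIntegrable)
      (f_cont.stronglyMeasurableAtFilter _ _) f_cont.continuousAt
  have h2 := h.const_sub (I 0)
  have heq : I = fun x => I 0 - ∫ t in (0:ℝ)..x, f t := funext I_eq
  rw [heq]; exact h2

noncomputable def W (x : ℝ) : ℝ := I x - f x * g x

noncomputable def W' (x : ℝ) : ℝ :=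
  -(f x) - (f x * (-(2 * x ^ 1) / 2) * g x +
    f x * ((1 / (2 * Real.sqrt (x ^ 2 + 4)) * (2 * x ^ 1) - 1) / 2))

lemma hasDerivAt_W (x : ℝ) : HasDerivAt W (W' x) x := by
  have h4 : (0:ℝ) < x ^ 2 + 4 := by positivity
  have hexp : HasDerivAt (fun y : ℝ => Real.exp (-y ^ 2 / 2))
      (Real.exp (-x ^ 2 / 2) * (-(2 * x ^ 1) / 2)) x := by
    exact (((hasDerivAt_pow 2 x).neg).div_const 2).exp
  have hsq : HasDerivAt (fun y : ℝ => y ^ 2 + 4) (2 * x ^ 1) x :=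
    (hasDerivAt_pow 2 x).add_const 4
  have hsqrt : HasDerivAt (fun y : ℝ => Real.sqrt (y ^ 2 + 4))
      (1 / (2 * Real.sqrt (x ^ 2 + 4)) * (2 * x ^ 1)) x :=
    (Real.hasDerivAt_sqrt h4.ne').comp x hsq
  have hg : HasDerivAt g ((1 / (2 * Real.sqrt (x ^ 2 + 4)) * (2 * x ^ 1) - 1) / 2) x :=
    (hsqrt.sub (hasDerivAt_id x)).div_const 2
  exact (hasDerivAt_I x).sub (hexp.mul hg)

lemma W'_neg (x : ℝ) (hx : 0 < x) : W' x < 0 := by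
  set s := Real.sqrt (x ^ 2 + 4) with hs_def
  have hs2 : s ^ 2 = x ^ 2 + 4 := Real.sq_sqrt (by positivity)
  have hs0 : 0 < s := Real.sqrt_pos.mpr (by positivity)
  have hkey : x * (x ^ 2 + 3) < s * (1 + x ^ 2) := by
    apply lt_of_pow_lt_pow_left₀ 2 (by positivity)
    nlinarith [sq_nonneg x]
  have hE : 0 < f x := Real.exp_pos _
  have hpos : 0 < 1 + x ^ 2 - x * s + x / s := by
    have hfrac : 0 < (s * (1 + x ^ 2) - x * (x ^ 2 + 3)) / s := div_pos (by linarith) hs0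
    have heq2 : 1 + x ^ 2 - x * s + x / s = (s * (1 + x ^ 2) - x * (x ^ 2 + 3)) / s := by
      field_simp
      linear_combination -x * hs2
    rw [heq2]; exact hfrac
  have heq : W' x = -(f x) * ((1 + x ^ 2 - x * s + x / s) / 2) := by
    unfold W' g
    rw [← hs_def]
    field_simp
    ring
  rw [heq]
  have h2 : 0 < f x * ((1 + x ^ 2 - x * s + x / s) / 2) := mul_pos hE (by linarith)
  linarith

lemma g_nonneg (x : ℝ) (hx : 0 ≤ x) : 0 ≤ g x := by
  unfold g
  have : x ≤ Real.sqrt (x ^ 2 + 4) := by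
    calc x ≤ Real.sqrt (x ^ 2) := by rw [Real.sqrt_sq hx]
    _ ≤ _ := Real.sqrt_le_sqrt (by linarith)
  linarith

lemma g_le_one (x : ℝ) (hx : 0 ≤ x) : g x ≤ 1 := by
  unfold g
  have : Real.sqrt (x ^ 2 + 4) ≤ x + 2 := by
    calc Real.sqrt (x ^ 2 + 4) ≤ Real.sqrt ((x + 2) ^ 2) := Real.sqrt_le_sqrt (by nlinarith)
    _ = x + 2 := Real.sqrt_sq (by linarith)
  linarith

lemma W_tendsto : Tendsto W atTop (nhds 0) := by
  have hI : Tendsto I atTop (nhds 0) := by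
    have h := MeasureTheory.intervalIntegral_tendsto_integral_Ioi 0
      f_integrable.integrableOn tendsto_id
    have h2 : Tendsto (fun x : ℝ => I 0 - ∫ t in (0:ℝ)..x, f t) atTop (nhds (I 0 - I 0)) :=
      tendsto_const_nhds.sub h
    rw [sub_self] at h2
    exact h2.congr (fun x => (I_eq x).symm)
  have hexp : Tendsto (fun x : ℝ => Real.exp (-x ^ 2 / 2)) atTop (nhds 0) := by
    apply Real.tendsto_exp_atBot.comp
    have h1 : Tendsto (fun x : ℝ => x ^ 2) atTop atTop := tendsto_pow_atTop two_ne_zero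
    exact (tendsto_neg_atTop_atBot.comp h1).atBot_div_const (by norm_num)
  have hb : Tendsto (fun x : ℝ => f x * g x) atTop (nhds 0) := by
    apply squeeze_zero' (g := fun x : ℝ => Real.exp (-x ^ 2 / 2))
    · filter_upwards [eventually_ge_atTop (0:ℝ)] with x hx
      exact mul_nonneg (Real.exp_pos _).le (g_nonneg x hx)
    · filter_upwards [eventually_ge_atTop (0:ℝ)] with x hx
      calc f x * g x ≤ f x * 1 := by
            apply mul_le_mul_of_nonneg_left (g_le_one x hx) (Real.exp_pos _).le
      _ = Real.exp (-x ^ 2 / 2) := by rw [mul_one]; rfl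
    · exact hexp
  have := hI.sub hb
  rw [sub_zero] at this
  exact this

lemma W_pos (ρ : ℝ) (hρ : 0 < ρ) : 0 < W ρ := by
  have hanti : StrictAntiOn W (Ici ρ) := by
    apply strictAntiOn_of_deriv_neg (convex_Ici ρ)
    · exact fun x _ => ((hasDerivAt_W x).differentiableAt.continuousAt).continuousWithinAt
    · intro x hx
      rw [interior_Ici] at hx
      rw [(hasDerivAt_W x).deriv]
      exact W'_neg x (hρ.trans hx)
  have hnonneg : ∀ x, ρ ≤ x → 0 ≤ W x := by
    intro x hx
    apply le_of_tendsto W_tendsto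
    filter_upwards [eventually_gt_atTop x] with y hy
    exact (hanti hx (hx.trans hy.le) hy).le
  have h1 : W (ρ + 1) < W ρ := hanti self_mem_Ici (mem_Ici.mpr (by linarith)) (by linarith)
  have h2 : 0 ≤ W (ρ + 1) := hnonneg _ (by linarith)
  linarith

end MillsAux

/-- Birnbaum's lower bound for Mills' ratio: `M(ρ) > 2/(√(ρ²+4)+ρ)` for `ρ > 0`. -/
theorem millsRatio_lower_bound (ρ : ℝ) (hρ : 0 < ρ) :
    2 / (Real.sqrt (ρ ^ 2 + 4) + ρ) < millsRatio ρ := by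
  have hW := MillsAux.W_pos ρ hρ
  unfold MillsAux.W MillsAux.I MillsAux.f MillsAux.g at hW
  set s := Real.sqrt (ρ ^ 2 + 4) with hs_def
  have hs2 : s ^ 2 = ρ ^ 2 + 4 := Real.sq_sqrt (by positivity)
  have hs0 : 0 < s := Real.sqrt_pos.mpr (by positivity)
  have hgeq : 2 / (s + ρ) = (s - ρ) / 2 := by
    rw [div_eq_div_iff (by linarith) (by norm_num)]
    nlinarith
  rw [hgeq]
  unfold millsRatio
  have hE : Real.exp (ρ ^ 2 / 2) * Real.exp (-ρ ^ 2 / 2) = 1 := by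
    rw [← Real.exp_add]; ring_nf; exact Real.exp_zero
  have hEpos : (0:ℝ) < Real.exp (ρ ^ 2 / 2) := Real.exp_pos _
  have h4 : (s - ρ) / 2 = Real.exp (ρ ^ 2 / 2) * (Real.exp (-ρ ^ 2 / 2) * ((s - ρ) / 2)) := by
    rw [← mul_assoc, hE, one_mul]
  rw [h4]
  exact mul_lt_mul_of_pos_left (by linarith) hEpos
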